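/- Let σ be the smoothed leaky ReLU with parameters γ ∈ (0,1), β > 0 as in (smoothed activation). Then sup_{x ∈ ℝ} |σ(x) − max(γx, x)| ≤ (1−γ)²/(2πβ) + (1−γ)/(πβ); in particular, σ converges uniformly to the leaky ReLU as β → ∞. -/

import Mathlib

/-!
With `b = π β² / (1 - γ)²`, the kernel `t ↦ (β / (1 - γ)) exp (-b t²)` has total mass
`(β / (1 - γ)) √(π / b) = 1`, so `σ(x) - max (γ x) x` is the constant `-(1 - γ)² / (2πβ)` plus the
kernel average of `max (γ (x + t)) (x + t) - max (γ x) x`. The leaky ReLU is `1`-Lipschitz, so that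
average is at most `(β / (1 - γ)) ∫ |t| exp (-b t²) dt = (β / (1 - γ)) / b = (1 - γ) / (π β)`.
-/

open MeasureTheory Filter
open scoped Real

/-- The Gaussian-smoothed leaky ReLU activation of the paper. -/
noncomputable def slrelu (γ β : ℝ) (x : ℝ) : ℝ :=
  -(1 - γ) ^ 2 / (2 * Real.pi * β) +
    (β / (1 - γ)) *
      ∫ u : ℝ, max (γ * u) u * Real.exp (-(Real.pi * β ^ 2 * (x - u) ^ 2) / (1 - γ) ^ 2)

/-- The CDF of the standard normal distribution. -/
noncomputable def stdNormalCDF (z : ℝ) : ℝ :=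
  ∫ t in Set.Iic z, Real.exp (-t ^ 2 / 2) / Real.sqrt (2 * Real.pi)

open Set Real
open scoped NNReal

section GaussianWeight

variable {b : ℝ}

theorem integral_Ioi_mul_exp_neg_mul_sq (hb : 0 < b) :
    ∫ t in Ioi (0 : ℝ), t * exp (-b * t ^ 2) = (2 * b)⁻¹ := by
  have h := integral_mul_cexp_neg_mul_sq (b := (b : ℂ)) (by simpa using hb)
  have : ∫ t in Ioi (0 : ℝ), ((t * exp (-b * t ^ 2) : ℝ) : ℂ) = ((2 * b)⁻¹ : ℝ) := by
    push_cast
    exact h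
  exact Complex.ofReal_injective (integral_ofReal.symm.trans this)

theorem integral_abs_mul_exp_neg_mul_sq (hb : 0 < b) :
    ∫ t, |t| * exp (-b * t ^ 2) = b⁻¹ := by
  have h := integral_comp_abs (f := fun t => t * exp (-b * t ^ 2))
  simp only [sq_abs] at h
  rw [h, integral_Ioi_mul_exp_neg_mul_sq hb]
  field_simp

theorem integrable_abs_mul_exp_neg_mul_sq (hb : 0 < b) :
    Integrable fun t : ℝ => |t| * exp (-b * t ^ 2) := by
  simpa [abs_mul] using (integrable_mul_exp_neg_mul_sq hb).abs

variable {g : ℝ → ℝ} {L : ℝ}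

theorem integrable_mul_exp_neg_mul_sq_of_abs_le (hb : 0 < b) (hg : AEStronglyMeasurable g)
    (hgL : ∀ t, |g t| ≤ L * |t|) : Integrable fun t => g t * exp (-b * t ^ 2) := by
  refine ((integrable_abs_mul_exp_neg_mul_sq hb).const_mul L).mono'
    (hg.mul (by fun_prop)) (Eventually.of_forall fun t => ?_)
  simp only [norm_mul, norm_eq_abs, abs_exp, ← mul_assoc]
  exact mul_le_mul_of_nonneg_right (hgL t) (exp_pos _).le

theorem abs_integral_mul_exp_neg_mul_sq_le (hb : 0 < b) (hgL : ∀ t, |g t| ≤ L * |t|) :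
    |∫ t, g t * exp (-b * t ^ 2)| ≤ L / b := by
  calc |∫ t, g t * exp (-b * t ^ 2)|
      ≤ ∫ t, L * (|t| * exp (-b * t ^ 2)) := by
        refine abs_integral_le_integral_abs.trans (integral_mono_of_nonneg
          (Eventually.of_forall fun _ => abs_nonneg _)
          ((integrable_abs_mul_exp_neg_mul_sq hb).const_mul L)
          (Eventually.of_forall fun t => ?_))
        simp only [abs_mul, abs_exp, ← mul_assoc]
        exact mul_le_mul_of_nonneg_right (hgL t) (exp_pos _).le
    _ = L / b := by rw [integral_const_mul, integral_abs_mul_exp_neg_mul_sq hb, div_eq_mul_inv]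

theorem LipschitzWith.abs_integral_comp_add_mul_exp_neg_mul_sq_sub_le {f : ℝ → ℝ} {K : ℝ≥0}
    (hf : LipschitzWith K f) (hb : 0 < b) (x : ℝ) :
    |(∫ t, f (x + t) * exp (-b * t ^ 2)) - f x * √(π / b)| ≤ K / b := by
  have hgL : ∀ t, |f (x + t) - f x| ≤ K * |t| := fun t => by
    simpa [Real.dist_eq] using hf.dist_le_mul (x + t) x
  have hg : AEStronglyMeasurable fun t => f (x + t) - f x :=
    (hf.continuous.comp (continuous_const_add x)).sub continuous_const |>.aestronglyMeasurable
  have hsplit : ∫ t, f (x + t) * exp (-b * t ^ 2) =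
      (∫ t, (f (x + t) - f x) * exp (-b * t ^ 2)) + f x * √(π / b) := by
    rw [← integral_gaussian, ← integral_const_mul, ← integral_add
      (integrable_mul_exp_neg_mul_sq_of_abs_le hb hg hgL)
      ((integrable_exp_neg_mul_sq hb).const_mul _)]
    congr 1 with t
    ring
  rw [hsplit, add_sub_cancel_right]
  exact abs_integral_mul_exp_neg_mul_sq_le hb hgL

end GaussianWeight

theorem lipschitzWith_max_mul_self {γ : ℝ} (hγ : |γ| ≤ 1) :
    LipschitzWith 1 fun u : ℝ => max (γ * u) u := by
  refine ((lipschitzWith_smul γ).max LipschitzWith.id).weaken (max_le ?_ le_rfl)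
  rw [← NNReal.coe_le_coe]
  simpa using hγ

theorem slrelu_eq_integral_comp_add (γ β x : ℝ) :
    slrelu γ β x = -(1 - γ) ^ 2 / (2 * π * β) + (β / (1 - γ)) *
      ∫ t, max (γ * (x + t)) (x + t) * exp (-(π * β ^ 2 / (1 - γ) ^ 2) * t ^ 2) := by
  rw [slrelu, ← integral_add_left_eq_self _ x]
  congr 3 with t
  ring_nf

theorem abs_slrelu_sub_max_le {γ β : ℝ} (hγ : γ ∈ Ioo (0 : ℝ) 1) (hβ : 0 < β) (x : ℝ) :
    |slrelu γ β x - max (γ * x) x| ≤ (1 - γ) ^ 2 / (2 * π * β) + (1 - γ) / (π * β) := by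
  obtain ⟨hγ0, hγ1⟩ := hγ
  have hγ1' : 0 < 1 - γ := sub_pos.2 hγ1
  set b := π * β ^ 2 / (1 - γ) ^ 2 with hb_def
  have hb : 0 < b := by positivity
  have hsqrt : √(π / b) = (1 - γ) / β := by
    rw [show π / b = ((1 - γ) / β) ^ 2 by rw [hb_def]; field_simp, sqrt_sq (by positivity)]
  have hsmooth := (lipschitzWith_max_mul_self (abs_le.2 ⟨by linarith, hγ1.le⟩))
    |>.abs_integral_comp_add_mul_exp_neg_mul_sq_sub_le hb x
  rw [hsqrt] at hsmooth
  rw [slrelu_eq_integral_comp_add]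
  set I := ∫ t, max (γ * (x + t)) (x + t) * exp (-b * t ^ 2)
  calc |-(1 - γ) ^ 2 / (2 * π * β) + β / (1 - γ) * I - max (γ * x) x|
      = |-((1 - γ) ^ 2 / (2 * π * β)) + β / (1 - γ) * (I - max (γ * x) x * ((1 - γ) / β))| := by
        congr 1
        field_simp
        ring
    _ ≤ (1 - γ) ^ 2 / (2 * π * β) + β / (1 - γ) * (1 / b) := by
        refine (abs_add_le _ _).trans (add_le_add (by rw [abs_neg, abs_of_pos (by positivity)]) ?_)
        rw [abs_mul, abs_of_pos (by positivity)]
        exact mul_le_mul_of_nonneg_left (by simpa using hsmooth) (by positivity)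
    _ = (1 - γ) ^ 2 / (2 * π * β) + (1 - γ) / (π * β) := by
        rw [hb_def]
        field_simp

/-- uniform approximation of the leaky ReLU by the smoothed activation. -/
theorem stmt8 (γ : ℝ) (hγ : γ ∈ Set.Ioo (0 : ℝ) 1) :
    (∀ β : ℝ, 0 < β → ∀ x : ℝ,
        |slrelu γ β x - max (γ * x) x| ≤
          (1 - γ) ^ 2 / (2 * Real.pi * β) + (1 - γ) / (Real.pi * β)) ∧
    Tendsto (fun β : ℝ => ⨆ x : ℝ, |slrelu γ β x - max (γ * x) x|) atTop (nhds 0) := by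
  refine ⟨fun β hβ x => abs_slrelu_sub_max_le hγ hβ x, ?_⟩
  have hbound : Tendsto (fun β : ℝ => (1 - γ) ^ 2 / (2 * π * β) + (1 - γ) / (π * β))
      atTop (nhds 0) := by
    have h2pi : (0 : ℝ) < 2 * π := by positivity
    simpa using (tendsto_const_nhds.div_atTop (tendsto_id.const_mul_atTop h2pi)).add
      (tendsto_const_nhds.div_atTop (tendsto_id.const_mul_atTop pi_pos))
  refine squeeze_zero' ?_ ?_ hbound
  all_goals filter_upwards [eventually_gt_atTop 0] with β hβ
  · exact (abs_nonneg _).trans (le_ciSup ⟨_, forall_mem_range.2 (abs_slrelu_sub_max_le hγ hβ)⟩ 0)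
  · exact ciSup_le (abs_slrelu_sub_max_le hγ hβ)
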